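/- Let H be self-adjoint and A a closed hermitean operator (not necessarily densely defined) on a Hilbert space X, such that e^{-itH} leaves D(A) ∩ D(H) invariant. Fix ψ₀ ∈ D(A) ∩ D(H) and let P be the orthogonal projection onto the closed span of {e^{-itH}ψ₀ : t ∈ ℝ}. Then t ↦ ⟨ψ(t), Aψ(t)⟩ = ⟨ψ(t), PAPψ(t)⟩ is continuously differentiable with derivative i(⟨Hψ(t), Aψ(t)⟩ − ⟨Aψ(t), Hψ(t)⟩). -/

import Mathlib

/-!
Write `ψ s = U s ψ₀`, `K` for the closed span of the orbit and `g s = P (A ψ s)`. As `ψ s ∈ K`,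
hermiticity of `A` turns the difference quotient of `⟪ψ s, A ψ s⟫` into
`⟪(ψ s - ψ t) / (s - t), g s⟫ + ⟪g t, (ψ s - ψ t) / (s - t)⟫`, so the derivative exists (and is
continuous) once `g` is locally bounded and weakly continuous against `K`. Weak continuity against
the span of the orbit is `⟪y, g s⟫ = ⟪A y, ψ s⟫`, and boundedness extends it to `K`.

Local boundedness is the heart of the matter. By the closed graph theorem every `P A U t` is
bounded on the Banach space `D(A) ∩ D(H)` with the graph norm of `A` and `H`; its norm is lower
semicontinuous in `t`, hence bounded near some `t₁` by Baire's theorem, and the group law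
`ψ s = U (s - b) (ψ b)` carries this bound to every other time.
-/

open Complex Filter Set Topology
open scoped InnerProductSpace

section InnerProduct

variable {𝕜 E α : Type*} [RCLike 𝕜] [NormedAddCommGroup E] [InnerProductSpace 𝕜 E]

theorem norm_le_of_forall_inner_le {D : Set E} {z : E} {c : ℝ} (hc : 0 ≤ c)
    (hz : z ∈ closure D) (h : ∀ y ∈ D, ‖⟪y, z⟫_𝕜‖ ≤ c * ‖y‖) : ‖z‖ ≤ c := by
  have hclosed : IsClosed {y : E | ‖⟪y, z⟫_𝕜‖ ≤ c * ‖y‖} := isClosed_le (by fun_prop) (by fun_prop)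
  have hzz : ‖z‖ ^ 2 ≤ c * ‖z‖ := by
    simpa [inner_self_eq_norm_sq_to_K] using hclosed.closure_subset_iff.2 h hz
  nlinarith [norm_nonneg z]

theorem lowerSemicontinuous_norm_of_continuous_inner [TopologicalSpace α] {D : Set E}
    {g : α → E} (hg : ∀ a, g a ∈ closure D) (h : ∀ y ∈ D, Continuous fun a => ⟪y, g a⟫_𝕜) :
    LowerSemicontinuous fun a => ‖g a‖ := by
  refine lowerSemicontinuous_iff_isClosed_preimage.2 fun c => ?_
  rcases lt_or_ge c 0 with hc | hc
  · convert isClosed_empty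
    exact eq_empty_of_forall_notMem fun a ha => (norm_nonneg (g a)).not_gt (lt_of_le_of_lt ha hc)
  · have hsub : (fun a => ‖g a‖) ⁻¹' Iic c = ⋂ y ∈ D, {a | ‖⟪y, g a⟫_𝕜‖ ≤ c * ‖y‖} := by
      ext a
      simp only [mem_preimage, mem_Iic, mem_iInter, mem_ofPred_eq]
      refine ⟨fun ha y _ => ?_, norm_le_of_forall_inner_le hc (hg a)⟩
      calc ‖⟪y, g a⟫_𝕜‖ ≤ ‖y‖ * ‖g a‖ := norm_inner_le_norm _ _
        _ ≤ c * ‖y‖ := by rw [mul_comm]; gcongr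
    rw [hsub]
    exact isClosed_biInter fun y hy => isClosed_le (h y hy).norm continuous_const

theorem tendsto_inner_of_isBoundedUnder {l : Filter α} {w g : α → E} {w₀ : E} {c : 𝕜}
    (hw : Tendsto w l (𝓝 w₀)) (hg : IsBoundedUnder (· ≤ ·) l fun a => ‖g a‖)
    (hc : Tendsto (fun a => ⟪w₀, g a⟫_𝕜) l (𝓝 c)) :
    Tendsto (fun a => ⟪w a, g a⟫_𝕜) l (𝓝 c) := by
  have h0 : Tendsto (fun a => ⟪w a - w₀, g a⟫_𝕜) l (𝓝 0) := by
    refine squeeze_zero_norm (fun a => norm_inner_le_norm _ _) ?_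
    simpa using (tendsto_iff_norm_sub_tendsto_zero.1 hw).zero_mul_isBoundedUnder_le
      (by simpa [Function.comp_def] using hg)
  simpa [inner_sub_left] using h0.add hc

theorem tendsto_inner_of_mem_closure {l : Filter α} {g : α → E} {g₀ : E} {D : Set E} {z : E}
    (hg : IsBoundedUnder (· ≤ ·) l fun a => ‖g a‖)
    (hD : ∀ y ∈ D, Tendsto (fun a => ⟪y, g a⟫_𝕜) l (𝓝 ⟪y, g₀⟫_𝕜)) (hz : z ∈ closure D) :
    Tendsto (fun a => ⟪z, g a⟫_𝕜) l (𝓝 ⟪z, g₀⟫_𝕜) := by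
  obtain ⟨M, hM⟩ := hg
  refine Metric.tendsto_nhds.2 fun ε hε => ?_
  set C := |M| + ‖g₀‖ + 1
  have hC : 0 < C := by positivity
  obtain ⟨y, hyD, hzy⟩ := Metric.mem_closure_iff.1 hz (ε / (2 * C)) (by positivity)
  rw [dist_eq_norm] at hzy
  filter_upwards [eventually_map.1 hM, Metric.tendsto_nhds.1 (hD y hyD) (ε / 2) (by positivity)]
    with a ha hya
  rw [dist_eq_norm] at hya ⊢
  have hsplit : ⟪z, g a⟫_𝕜 - ⟪z, g₀⟫_𝕜 = ⟪z - y, g a - g₀⟫_𝕜 + (⟪y, g a⟫_𝕜 - ⟪y, g₀⟫_𝕜) := by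
    simp only [inner_sub_left, inner_sub_right]; ring
  have hga : ‖g a - g₀‖ < C := (norm_sub_le _ _).trans_lt (by linarith [le_abs_self M])
  calc ‖⟪z, g a⟫_𝕜 - ⟪z, g₀⟫_𝕜‖ ≤ ‖z - y‖ * ‖g a - g₀‖ + ‖⟪y, g a⟫_𝕜 - ⟪y, g₀⟫_𝕜‖ := by
        rw [hsplit]; exact (norm_add_le _ _).trans (by gcongr; exact norm_inner_le_norm _ _)
    _ < ε / (2 * C) * C + ε / 2 := by gcongr
    _ = ε := by field_simp; ring

theorem continuous_inner_of_isBoundedUnder [TopologicalSpace α] {w g : α → E}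
    (hw : Continuous w) (hg : ∀ a, IsBoundedUnder (· ≤ ·) (𝓝 a) fun b => ‖g b‖)
    (hg' : ∀ a, Tendsto (fun b => ⟪w a, g b⟫_𝕜) (𝓝 a) (𝓝 ⟪w a, g a⟫_𝕜)) :
    Continuous fun a => ⟪w a, g a⟫_𝕜 :=
  continuous_iff_continuousAt.2 fun a =>
    tendsto_inner_of_isBoundedUnder (hw.tendsto a) (hg a) (hg' a)

end InnerProduct

theorem LowerSemicontinuous.exists_eventually_le {α : Type*} [TopologicalSpace α] [BaireSpace α]
    [Nonempty α] {f : α → ℝ} (hf : LowerSemicontinuous f) : ∃ a C, ∀ᶠ x in 𝓝 a, f x ≤ C := by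
  have hcover : ⋃ n : ℕ, f ⁻¹' Iic n = univ :=
    eq_univ_of_forall fun x => mem_iUnion.2 ⟨⌈f x⌉₊, mem_Iic.2 (Nat.le_ceil (f x))⟩
  obtain ⟨n, a, ha⟩ :=
    nonempty_interior_of_iUnion_of_closed (fun n : ℕ => hf.isClosed_preimage n) hcover
  exact ⟨a, n, mem_interior_iff_mem_nhds.1 ha⟩

theorem ContinuousLinearMap.lowerSemicontinuous_norm {𝕜 E F α : Type*}
    [NontriviallyNormedField 𝕜] [SeminormedAddCommGroup E] [NormedSpace 𝕜 E]
    [SeminormedAddCommGroup F] [NormedSpace 𝕜 F] [TopologicalSpace α] {T : α → E →L[𝕜] F}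
    (h : ∀ x, LowerSemicontinuous fun a => ‖T a x‖) : LowerSemicontinuous fun a => ‖T a‖ := by
  refine lowerSemicontinuous_iff_isClosed_preimage.2 fun c => ?_
  rcases lt_or_ge c 0 with hc | hc
  · convert isClosed_empty
    exact eq_empty_of_forall_notMem fun a ha => (norm_nonneg (T a)).not_gt (lt_of_le_of_lt ha hc)
  · have hsub : (fun a => ‖T a‖) ⁻¹' Iic c = ⋂ x, (fun a => ‖T a x‖) ⁻¹' Iic (c * ‖x‖) := by
      ext a
      simp only [mem_preimage, mem_Iic, mem_iInter]
      exact ContinuousLinearMap.opNorm_le_iff hc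
    rw [hsub]
    exact isClosed_iInter fun x => (h x).isClosed_preimage _

theorem continuous_apply_of_dense {α E F : Type*} [TopologicalSpace α] [PseudoMetricSpace E]
    [PseudoMetricSpace F] {U : α → E → F} {K : NNReal} (hU : ∀ a, LipschitzWith K (U a))
    {D : Set E} (hD : Dense D) (h : ∀ x ∈ D, Continuous fun a => U a x) (x : E) :
    Continuous fun a => U a x := by
  refine continuous_iff_continuousAt.2 fun a₀ => ?_
  have hclosed : IsClosed {x | Tendsto (fun a => U a x) (𝓝 a₀) (𝓝 (U a₀ x))} :=
    (LipschitzWith.uniformEquicontinuous U K hU).equicontinuous.isClosed_setOfPred_tendsto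
      (hU a₀).continuous
  exact hclosed.closure_subset_iff.2 (fun y hy => (h y hy).continuousAt) (hD x)

theorem HasDerivAt.mem_topologicalClosure {𝕜 E : Type*} [NontriviallyNormedField 𝕜]
    [NormedAddCommGroup E] [NormedSpace 𝕜 E] [NormedSpace ℝ E] [SMul ℝ 𝕜] [IsScalarTower ℝ 𝕜 E]
    {S : Submodule 𝕜 E} {u : ℝ → E} {u' : E} {t : ℝ} (h : HasDerivAt u u' t)
    (hu : ∀ s, u s ∈ S) : u' ∈ S.topologicalClosure :=
  S.isClosed_topologicalClosure.mem_of_tendsto (hasDerivAt_iff_tendsto_slope.1 h) <|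
    Eventually.of_forall fun s =>
      S.le_topologicalClosure (S.smul_of_tower_mem _ (S.sub_mem (hu s) (hu t)))

namespace LinearPMap

section Algebraic

variable {R E F G : Type*} [Ring R] [AddCommGroup E] [Module R E] [AddCommGroup F] [Module R F]
  [AddCommGroup G] [Module R G]

/-- The graph of `x ↦ (A x, B x)` on `A.domain ⊓ B.domain`. -/
def jointGraph (A : E →ₗ.[R] F) (B : E →ₗ.[R] G) : Submodule R (E × F × G) :=
  A.graph.comap (LinearMap.id.prodMap (LinearMap.fst R F G)) ⊓
    B.graph.comap (LinearMap.id.prodMap (LinearMap.snd R F G))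

variable {A : E →ₗ.[R] F} {B : E →ₗ.[R] G}

theorem mk_mem_jointGraph {x : E} (hA : x ∈ A.domain) (hB : x ∈ B.domain) :
    (x, A ⟨x, hA⟩, B ⟨x, hB⟩) ∈ A.jointGraph B :=
  ⟨A.mem_graph ⟨x, hA⟩, B.mem_graph ⟨x, hB⟩⟩

theorem mem_domain_of_mem_jointGraph {p : E × F × G} (hp : p ∈ A.jointGraph B) :
    p.1 ∈ A.domain ∧ p.1 ∈ B.domain :=
  ⟨mem_domain_of_mem_graph hp.1, mem_domain_of_mem_graph hp.2⟩

end Algebraic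

variable {𝕜 E F G Y : Type*} [NontriviallyNormedField 𝕜] [NormedAddCommGroup E] [NormedSpace 𝕜 E]
  [NormedAddCommGroup F] [NormedSpace 𝕜 F] [NormedAddCommGroup G] [NormedSpace 𝕜 G]
  [NormedAddCommGroup Y] [NormedSpace 𝕜 Y] {A : E →ₗ.[𝕜] F} {B : E →ₗ.[𝕜] G}

theorem isClosed_jointGraph (hA : A.IsClosed) (hB : B.IsClosed) :
    _root_.IsClosed (A.jointGraph B : Set (E × F × G)) :=
  (hA.preimage (continuous_id.prodMap continuous_fst)).inter
    (hB.preimage (continuous_id.prodMap continuous_snd))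

theorem IsClosed.isClosed_graph_comp (hA : A.IsClosed) (V : Y →L[𝕜] E)
    (hV : ∀ y, V y ∈ A.domain) :
    _root_.IsClosed
      ((A.toFun ∘ₗ (V : Y →ₗ[𝕜] E).codRestrict A.domain hV).graph : Set (Y × F)) := by
  have hgraph : ((A.toFun ∘ₗ (V : Y →ₗ[𝕜] E).codRestrict A.domain hV).graph : Set (Y × F))
      = (fun p : Y × F => (V p.1, p.2)) ⁻¹' A.graph := by
    ext ⟨y, z⟩
    exact (LinearMap.mem_graph_iff _ _).trans (image_iff (hV y))
  rw [hgraph]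
  exact hA.preimage (by fun_prop)

noncomputable def IsClosed.compCLM [CompleteSpace Y] [CompleteSpace F] (hA : A.IsClosed)
    (V : Y →L[𝕜] E) (hV : ∀ y, V y ∈ A.domain) : Y →L[𝕜] F :=
  .ofIsClosedGraph (hA.isClosed_graph_comp V hV)

end LinearPMap

section ComplexHilbert

variable {X : Type*} [NormedAddCommGroup X] [InnerProductSpace ℂ X]

theorem hasDerivAt_inner_of_inner_comm {u v : ℝ → X} {u' : X} {t : ℝ}
    (hu : HasDerivAt u u' t) (hcomm : ∀ s, ⟪u t, v s⟫_ℂ = ⟪v t, u s⟫_ℂ)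
    (hv : IsBoundedUnder (· ≤ ·) (𝓝 t) fun s => ‖v s‖)
    (hv' : Tendsto (fun s => ⟪u', v s⟫_ℂ) (𝓝 t) (𝓝 ⟪u', v t⟫_ℂ)) :
    HasDerivAt (fun s => ⟪u s, v s⟫_ℂ) (⟪u', v t⟫_ℂ + ⟪v t, u'⟫_ℂ) t := by
  have hslope : ∀ s, slope (fun s => ⟪u s, v s⟫_ℂ) t s
      = ⟪slope u t s, v s⟫_ℂ + ⟪v t, slope u t s⟫_ℂ := by
    intro s
    simp only [slope_def_module, ← Complex.coe_smul, inner_smul_left, inner_smul_right,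
      inner_sub_left, inner_sub_right, Complex.conj_ofReal, hcomm s, hcomm t]
    ring
  have hu' := hasDerivAt_iff_tendsto_slope.1 hu
  rw [hasDerivAt_iff_tendsto_slope, funext hslope]
  exact (tendsto_inner_of_isBoundedUnder hu' (hv.mono nhdsWithin_le_nhds)
    (hv'.mono_left nhdsWithin_le_nhds)).add
      ((continuous_const.inner continuous_id).tendsto _ |>.comp hu')

section Hermitean

variable {A : X →ₗ.[ℂ] X} {S : Submodule ℂ X} {P : X →L[ℂ] X}

theorem continuous_inner_proj_apply {α : Type*} [TopologicalSpace α]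
    (hAsym : ∀ x y : A.domain, ⟪A x, (y : X)⟫_ℂ = ⟪(x : X), A y⟫_ℂ) (hSA : S ≤ A.domain)
    (hPS : ∀ y ∈ S, ∀ x, ⟪y, P x⟫_ℂ = ⟪y, x⟫_ℂ) {φ : α → X} (hφ : Continuous φ)
    (hφA : ∀ a, φ a ∈ A.domain)
    (hbdd : ∀ a, IsBoundedUnder (· ≤ ·) (𝓝 a) fun b => ‖P (A ⟨φ b, hφA b⟩)‖)
    {z : X} (hz : z ∈ S.topologicalClosure) :
    Continuous fun a => ⟪z, P (A ⟨φ a, hφA a⟩)⟫_ℂ := by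
  refine continuous_iff_continuousAt.2 fun a => tendsto_inner_of_mem_closure (D := S) (hbdd a)
    (fun y hy => ?_) (by rwa [← Submodule.topologicalClosure_coe])
  have hy : ∀ b, ⟪y, P (A ⟨φ b, hφA b⟩)⟫_ℂ = ⟪A ⟨y, hSA hy⟩, φ b⟫_ℂ := fun b =>
    (hPS y hy _).trans (hAsym ⟨y, hSA hy⟩ ⟨φ b, hφA b⟩).symm
  simp only [hy]
  exact (continuous_const.inner hφ).tendsto a

theorem hasDerivAt_inner_apply {K : Set X}
    (hAsym : ∀ x y : A.domain, ⟪A x, (y : X)⟫_ℂ = ⟪(x : X), A y⟫_ℂ)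
    (hPK : ∀ z ∈ K, ∀ x, ⟪z, P x⟫_ℂ = ⟪z, x⟫_ℂ)
    {φ : ℝ → X} {φ' : X} {t : ℝ} (hφ : HasDerivAt φ φ' t) (hφA : ∀ s, φ s ∈ A.domain)
    (hφK : ∀ s, φ s ∈ K) (hφ'K : φ' ∈ K)
    (hbdd : IsBoundedUnder (· ≤ ·) (𝓝 t) fun s => ‖P (A ⟨φ s, hφA s⟩)‖)
    (hweak : Tendsto (fun s => ⟪φ', P (A ⟨φ s, hφA s⟩)⟫_ℂ) (𝓝 t)
      (𝓝 ⟪φ', P (A ⟨φ t, hφA t⟩)⟫_ℂ)) :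
    HasDerivAt (fun s => ⟪φ s, A ⟨φ s, hφA s⟩⟫_ℂ)
      (⟪φ', A ⟨φ t, hφA t⟩⟫_ℂ + ⟪A ⟨φ t, hφA t⟩, φ'⟫_ℂ) t := by
  have hcomm : ∀ s, ⟪φ t, P (A ⟨φ s, hφA s⟩)⟫_ℂ = ⟪P (A ⟨φ t, hφA t⟩), φ s⟫_ℂ := fun s => by
    rw [← inner_conj_symm (P _), hPK _ (hφK t), hPK _ (hφK s)]
    exact (hAsym ⟨φ t, hφA t⟩ ⟨φ s, hφA s⟩).symm.trans (inner_conj_symm _ _).symm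
  have hderiv := hasDerivAt_inner_of_inner_comm hφ hcomm hbdd hweak
  rwa [funext fun s => hPK _ (hφK s) _, ← inner_conj_symm (P _), hPK _ hφ'K, inner_conj_symm]
    at hderiv

end Hermitean

/-- `U t` plays the role of `e^{-itH}`. -/
structure IsPropagator (H : X →ₗ.[ℂ] X) (U : ℝ → X ≃ₗᵢ[ℂ] X) : Prop where
  map_zero : ∀ x, U 0 x = x
  map_add : ∀ s t x, U (s + t) x = U s (U t x)
  hasDerivAt : ∀ (ψ : H.domain) (t : ℝ), HasDerivAt (fun s => U s (ψ : X)) (-I • U t (H ψ)) t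

namespace IsPropagator

variable {H : X →ₗ.[ℂ] X} {U : ℝ → X ≃ₗᵢ[ℂ] X}

theorem continuous_apply_of_mem (hU : IsPropagator H U) {x : X} (hx : x ∈ H.domain) :
    Continuous fun t => U t x :=
  continuous_iff_continuousAt.2 fun t => (hU.hasDerivAt ⟨x, hx⟩ t).continuousAt

theorem continuous_apply (hU : IsPropagator H U) (hH : Dense (H.domain : Set X)) (x : X) :
    Continuous fun t => U t x :=
  continuous_apply_of_dense (fun t => (U t).lipschitz) hH (fun _ => hU.continuous_apply_of_mem) x

theorem apply_comm (hU : IsPropagator H U) {x : X} (hx : x ∈ H.domain) (t : ℝ)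
    (hxt : U t x ∈ H.domain) : H ⟨U t x, hxt⟩ = U t (H ⟨x, hx⟩) := by
  have hshift : HasDerivAt (fun s => U (s + t) x) (-I • U t (H ⟨x, hx⟩)) 0 := by
    simpa using (hU.hasDerivAt ⟨x, hx⟩ (0 + t)).comp_add_const 0 t
  simp only [hU.map_add] at hshift
  have hgen := hU.hasDerivAt ⟨U t x, hxt⟩ 0
  rw [hU.map_zero] at hgen
  exact smul_right_injective X (neg_ne_zero.2 I_ne_zero) (hgen.unique hshift)

theorem isBoundedUnder_norm_proj_apply_orbit [CompleteSpace X] {A : X →ₗ.[ℂ] X}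
    {S : Submodule ℂ X} {P : X →L[ℂ] X} {ψ₀ : X} (hU : IsPropagator H U)
    (hA : A.IsClosed) (hH : H.IsClosed)
    (hAsym : ∀ x y : A.domain, ⟪A x, (y : X)⟫_ℂ = ⟪(x : X), A y⟫_ℂ)
    (hInvA : ∀ t x, x ∈ A.domain → x ∈ H.domain → U t x ∈ A.domain)
    (hInvH : ∀ t x, x ∈ A.domain → x ∈ H.domain → U t x ∈ H.domain)
    (hψ₀A : ψ₀ ∈ A.domain) (hψ₀H : ψ₀ ∈ H.domain)
    (hSA : S ≤ A.domain) (hPmem : ∀ x, P x ∈ S.topologicalClosure)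
    (hPS : ∀ y ∈ S, ∀ x, ⟪y, P x⟫_ℂ = ⟪y, x⟫_ℂ) (t₀ : ℝ) :
    IsBoundedUnder (· ≤ ·) (𝓝 t₀) fun s => ‖P (A ⟨U s ψ₀, hInvA s ψ₀ hψ₀A hψ₀H⟩)‖ := by
  set W := A.jointGraph H
  have : CompleteSpace W := (LinearPMap.isClosed_jointGraph hA hH).completeSpace_coe
  have hW (p : W) := LinearPMap.mem_domain_of_mem_jointGraph p.2
  let T : ℝ → W →L[ℂ] X := fun t => P ∘L hA.compCLM
    ((U t : X →L[ℂ] X) ∘L ContinuousLinearMap.fst ℂ X (X × X) ∘L W.subtypeL)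
    fun p => hInvA t _ (hW p).1 (hW p).2
  have hT : LowerSemicontinuous fun t => ‖T t‖ := by
    refine ContinuousLinearMap.lowerSemicontinuous_norm fun p =>
      lowerSemicontinuous_norm_of_continuous_inner (𝕜 := ℂ) (D := S) (fun t => hPmem _)
        fun y hy => ?_
    have hinner : ∀ t, ⟪y, T t p⟫_ℂ = ⟪A ⟨y, hSA hy⟩, U t (p : X × X × X).1⟫_ℂ :=
      fun t => (hPS y hy _).trans
        (hAsym ⟨y, hSA hy⟩ ⟨U t (p : X × X × X).1, hInvA t _ (hW p).1 (hW p).2⟩).symm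
    simpa only [hinner] using continuous_const.inner (hU.continuous_apply_of_mem (hW p).2)
  obtain ⟨t₁, C, hC⟩ := hT.exists_eventually_le
  set b := t₀ - t₁
  let p : W := ⟨_, LinearPMap.mk_mem_jointGraph (hInvA b ψ₀ hψ₀A hψ₀H) (hInvH b ψ₀ hψ₀A hψ₀H)⟩
  have hshift : Tendsto (fun s => s - b) (𝓝 t₀) (𝓝 t₁) := by
    simpa [b] using (continuous_sub_right b).tendsto t₀
  refine ⟨C * ‖p‖, eventually_map.2 ?_⟩
  filter_upwards [hshift.eventually hC] with s hs
  calc ‖P (A ⟨U s ψ₀, hInvA s ψ₀ hψ₀A hψ₀H⟩)‖ = ‖T (s - b) p‖ := by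
        simp only [T, ContinuousLinearMap.comp_apply]
        congr 3
        exact Subtype.ext (by simp [p, b, ← hU.map_add])
    _ ≤ ‖T (s - b)‖ * ‖p‖ := (T (s - b)).le_opNorm p
    _ ≤ C * ‖p‖ := by gcongr

end IsPropagator

end ComplexHilbert

/-- **Ehrenfest theorem for closed hermitean (not necessarily densely defined) `A`.**
`H` self-adjoint, `A` closed and hermitean, `U t = e^{-itH}` leaves `D(A) ∩ D(H)`
invariant, `ψ₀ ∈ D(A) ∩ D(H)`, and `P` is the orthogonal projection onto the closed span
of the orbit `{U t ψ₀ : t ∈ ℝ}` (characterized by: `P` maps into the closed span, fixes it,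
and is self-adjoint).  Then `⟨ψ(t), A ψ(t)⟩ = ⟨ψ(t), P A P ψ(t)⟩` and `t ↦ ⟨ψ(t), A ψ(t)⟩`
is continuously differentiable with derivative `i(⟨Hψ(t), Aψ(t)⟩ - ⟨Aψ(t), Hψ(t)⟩)`. -/
theorem ehrenfest_closed_hermitean
    {X : Type*} [NormedAddCommGroup X] [InnerProductSpace ℂ X] [CompleteSpace X]
    (A H : X →ₗ.[ℂ] X)
    (hH : IsSelfAdjoint H)
    (hAsym : ∀ x y : A.domain, (inner ℂ (A x) (y : X) : ℂ) = inner ℂ (x : X) (A y))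
    (hAclosed : A.IsClosed)
    (U : ℝ → X ≃ₗᵢ[ℂ] X)
    (hU0 : ∀ x : X, U 0 x = x)
    (hUadd : ∀ (s t : ℝ) (x : X), U (s + t) x = U s (U t x))
    (hUgen : ∀ (ψ : H.domain) (t : ℝ),
      HasDerivAt (fun s : ℝ => U s (ψ : X)) (-I • U t (H ψ)) t)
    (hInvA : ∀ (t : ℝ) (x : X), x ∈ A.domain → x ∈ H.domain → U t x ∈ A.domain)
    (hInvH : ∀ (t : ℝ) (x : X), x ∈ A.domain → x ∈ H.domain → U t x ∈ H.domain)
    (ψ₀ : X) (hψ₀A : ψ₀ ∈ A.domain) (hψ₀H : ψ₀ ∈ H.domain)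
    (P : X →L[ℂ] X)
    (hPmem : ∀ x : X,
      P x ∈ (Submodule.span ℂ (Set.range fun s : ℝ => U s ψ₀)).topologicalClosure)
    (hPfix : ∀ x ∈ (Submodule.span ℂ (Set.range fun s : ℝ => U s ψ₀)).topologicalClosure,
      P x = x)
    (hPsa : ∀ x y : X, (inner ℂ (P x) y : ℂ) = inner ℂ x (P y)) :
    (∀ t : ℝ, (inner ℂ (U t ψ₀) (P (A ⟨U t ψ₀, hInvA t ψ₀ hψ₀A hψ₀H⟩)) : ℂ)
        = inner ℂ (U t ψ₀) (A ⟨U t ψ₀, hInvA t ψ₀ hψ₀A hψ₀H⟩))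
    ∧ (∀ t : ℝ, HasDerivAt
        (fun s : ℝ => (inner ℂ (U s ψ₀) (A ⟨U s ψ₀, hInvA s ψ₀ hψ₀A hψ₀H⟩) : ℂ))
        (I * ((inner ℂ (H ⟨U t ψ₀, hInvH t ψ₀ hψ₀A hψ₀H⟩)
                (A ⟨U t ψ₀, hInvA t ψ₀ hψ₀A hψ₀H⟩) : ℂ)
            - (inner ℂ (A ⟨U t ψ₀, hInvA t ψ₀ hψ₀A hψ₀H⟩)
                (H ⟨U t ψ₀, hInvH t ψ₀ hψ₀A hψ₀H⟩) : ℂ))) t)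
    ∧ Continuous (fun t : ℝ =>
        I * ((inner ℂ (H ⟨U t ψ₀, hInvH t ψ₀ hψ₀A hψ₀H⟩)
                (A ⟨U t ψ₀, hInvA t ψ₀ hψ₀A hψ₀H⟩) : ℂ)
            - (inner ℂ (A ⟨U t ψ₀, hInvA t ψ₀ hψ₀A hψ₀H⟩)
                (H ⟨U t ψ₀, hInvH t ψ₀ hψ₀A hψ₀H⟩) : ℂ))) := by
  set S := Submodule.span ℂ (Set.range fun s : ℝ => U s ψ₀)
  have hU : IsPropagator H U := ⟨hU0, hUadd, hUgen⟩
  have hψS (s : ℝ) : U s ψ₀ ∈ S := Submodule.subset_span ⟨s, rfl⟩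
  have hψK (s : ℝ) := S.le_topologicalClosure (hψS s)
  have hSA : S ≤ A.domain := Submodule.span_le.2 (range_subset_iff.2 fun s => hInvA s ψ₀ hψ₀A hψ₀H)
  have hPK : ∀ z ∈ S.topologicalClosure, ∀ x, ⟪z, P x⟫_ℂ = ⟪z, x⟫_ℂ :=
    fun z hz x => by rw [← hPsa, hPfix z hz]
  have hPS (y : X) (hy : y ∈ S) := hPK y (S.le_topologicalClosure hy)
  have hbdd := hU.isBoundedUnder_norm_proj_apply_orbit hAclosed hH.isClosed hAsym hInvA hInvH
    hψ₀A hψ₀H hSA hPmem hPS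
  have hweak {z : X} (hz : z ∈ S.topologicalClosure) :=
    continuous_inner_proj_apply hAsym hSA hPS (hU.continuous_apply_of_mem hψ₀H) _ hbdd hz
  have hHψ (t : ℝ) := hU.apply_comm hψ₀H t (hInvH t ψ₀ hψ₀A hψ₀H)
  have hHψK (t : ℝ) : U t (H ⟨ψ₀, hψ₀H⟩) ∈ S.topologicalClosure := by
    simpa [smul_smul] using S.topologicalClosure.smul_mem (-I)
      ((hUgen ⟨ψ₀, hψ₀H⟩ t).mem_topologicalClosure hψS)
  refine ⟨fun t => hPK _ (hψK t) _, fun t => ?_, ?_⟩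
  · have hψ'K := S.topologicalClosure.smul_mem (-I) (hHψK t)
    rw [hHψ]
    convert hasDerivAt_inner_apply hAsym hPK (hUgen ⟨ψ₀, hψ₀H⟩ t) _ hψK hψ'K (hbdd t)
      ((hweak hψ'K).tendsto t) using 1
    simp only [inner_smul_left, inner_smul_right, map_neg, conj_I]
    ring
  · have hc := continuous_inner_of_isBoundedUnder (hU.continuous_apply hH.dense_domain _) hbdd
      fun t => (hweak (hHψK t)).tendsto t
    simp only [hPK _ (hHψK _)] at hc
    simp_rw [← inner_conj_symm (A _) (H _), hHψ]
    exact continuous_const.mul (hc.sub (continuous_conj.comp hc))
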